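/- arXiv:2202.08263 — 5 statements merged into one kernel-verified Lean document; each statement's English description precedes it below -/
import Mathlib

section
/- Let ω and φ be real quaternions satisfying φ² = −1, (ωφ)² = −1, and ω + ω² = −1, and let U = {ω^a φ^b : a ∈ {0,1,2}, b ∈ {0,1,2,3}} be the order-12 group they generate. Let R ⊆ ℍ² be the set of the ten vectors (ω−ω², 0), ((φ+1)ω^c, 1), (ω^c, (φ−1)ω), (ω^c, (φ−1)ω²) for c ∈ {0,1,2}. Then the set {(u·a, u·b) : u ∈ U, (a,b) ∈ R} of left scalar multiples of these vectors has exactly 120 elements. -/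
open Quaternion

/-- index map for the group `U` -/
noncomputable def O1g (ω φ : ℍ[ℝ]) : Fin 3 × Fin 4 → ℍ[ℝ] := fun p => ω^(p.1:ℕ) * φ^(p.2:ℕ)

/-- index map for the root set `R` -/
noncomputable def O1r (ω φ : ℍ[ℝ]) : Option (Fin 3 × Fin 3) → ℍ[ℝ] × ℍ[ℝ]
  | none => (ω - ω^2, 0)
  | some (c, 0) => ((φ+1)*ω^(c:ℕ), (1:ℍ[ℝ]))
  | some (c, 1) => (ω^(c:ℕ), (φ-1)*ω)
  | some (c, _) => (ω^(c:ℕ), (φ-1)*ω^2)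

/-- index map for the whole set of 120 vectors -/
noncomputable def O1F (ω φ : ℍ[ℝ]) : (Fin 3 × Fin 4) × Option (Fin 3 × Fin 3) → ℍ[ℝ] × ℍ[ℝ] :=
  fun x => (O1g ω φ x.1 * (O1r ω φ x.2).1, O1g ω φ x.1 * (O1r ω φ x.2).2)

set_option maxHeartbeats 1000000 in
/-- Let `ω, φ` be quaternions with `φ² = −1`, `(ωφ)² = −1`, `ω + ω² = −1`, let
`U = {ω^a φ^b : a ∈ {0,1,2}, b ∈ {0,1,2,3}}` be the order-12 group they generate, and let
`R ⊆ ℍ²` consist of the ten vectors `(ω−ω², 0)`, `((φ+1)ω^c, 1)`, `(ω^c, (φ−1)ω)`,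
`(ω^c, (φ−1)ω²)` for `c ∈ {0,1,2}`.  Then the set of componentwise left scalar multiples
`{(u·a, u·b) : u ∈ U, (a,b) ∈ R}` has exactly 120 elements. -/
theorem roots_of_O1_card_120 (ω φ : ℍ[ℝ])
    (hφ : φ ^ 2 = -1) (hωφ : (ω * φ) ^ 2 = -1) (hω : ω + ω ^ 2 = -1)
    (U : Set ℍ[ℝ]) (hU : U = {q : ℍ[ℝ] | ∃ a < 3, ∃ b < 4, q = ω ^ a * φ ^ b})
    (R : Set (ℍ[ℝ] × ℍ[ℝ]))
    (hR : R = {p : ℍ[ℝ] × ℍ[ℝ] | p = (ω - ω ^ 2, 0) ∨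
        ∃ c < 3, p = ((φ + 1) * ω ^ c, 1) ∨ p = (ω ^ c, (φ - 1) * ω) ∨
          p = (ω ^ c, (φ - 1) * ω ^ 2)}) :
    Nat.card {p : ℍ[ℝ] × ℍ[ℝ] | ∃ u ∈ U, ∃ r ∈ R, p = (u * r.1, u * r.2)} = 120 := by
  -- ### basic consequences of the relations
  have h1n1 : (1:ℍ[ℝ]) ≠ -1 := by
    intro h; have := congrArg QuaternionAlgebra.re h; simp at this; norm_num at this
  have hω2' : ω^2 = -1 - ω := by rw [← hω]; noncomm_ring
  have hωω : ω * ω = -1 - ω := by rw [← sq, hω2']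
  have hω3 : ω^3 = 1 := by rw [pow_succ, hω2', sub_mul, neg_one_mul, hωω]; noncomm_ring
  have hφ4 : φ^4 = 1 := by rw [show (4:ℕ) = 2*2 by rfl, pow_mul, hφ]; norm_num
  have hω0 : ω ≠ 0 := by intro h; rw [h] at hω3; simp at hω3
  have hφ0 : φ ≠ 0 := by intro h; rw [h] at hφ; simp at hφ
  have hω1 : ω ≠ 1 := by
    intro h; rw [h] at hω; simp at hω
    have := congrArg QuaternionAlgebra.re hω; simp at this; norm_num at this
  have hω21 : ω^2 ≠ 1 := by
    intro h
    have : ω = 1 := by rw [← hω3, pow_succ, h, one_mul]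
    exact hω1 this
  have hωn1 : ω ≠ -1 := by
    intro h; apply hω21; rw [h]; noncomm_ring
  have hω2n1 : ω^2 ≠ -1 := by
    intro h; rw [h] at hω
    have : ω = 0 := by rw [← add_neg_cancel_right ω (-1:ℍ[ℝ]), hω]; abel
    exact hω0 this
  have hωω2 : ω ≠ ω^2 := by
    intro h
    have : ω * 1 = ω * ω := by rw [mul_one, ← sq, ← h]
    exact hω1 (mul_left_cancel₀ hω0 this).symm
  have hφ1 : φ ≠ 1 := by intro h; rw [h] at hφ; simp at hφ; exact h1n1 hφ
  have hφn1 : φ ≠ -1 := by intro h; rw [h] at hφ; simp at hφ; exact h1n1 hφ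
  have hφω : φ ≠ ω := by intro h; rw [← h] at hω2n1; exact hω2n1 hφ
  have hω4 : ω^4 = ω := by rw [pow_succ, hω3, one_mul]
  have hφω2 : φ ≠ ω^2 := by
    intro h
    apply hωn1
    rw [← hω4, show (4:ℕ)=2*2 by rfl, pow_mul, ← h, hφ]
  have hωφω : ω * φ * ω = φ := by
    have h' : (ω*φ)*(ω*φ) = φ*φ := by rw [← sq, ← sq, hωφ, hφ]
    rw [← mul_assoc] at h'
    exact mul_right_cancel₀ hφ0 h'
  have hswap : φ * ω = ω^2 * φ := by
    have : ω^3 * (φ * ω) = ω^2 * φ := by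
      rw [pow_succ, mul_assoc, ← mul_assoc ω φ ω, hωφω]
    rwa [hω3, one_mul] at this
  have h22 : ω^2*ω^2 = ω := by rw [← pow_add]; norm_num [hω4]
  have hA : ω^2*ω = 1 := by rw [← pow_succ]; norm_num [hω3]
  have hB : ω*ω^2 = 1 := by rw [← pow_succ']; norm_num [hω3]
  have hswap2 : φ * ω^2 = ω * φ := by
    rw [sq, ← mul_assoc, hswap, mul_assoc, hswap, ← mul_assoc, h22]
  have hnω : normSq ω = 1 := by
    have h3 : (normSq ω)^3 = 1 := by rw [← map_pow, hω3, map_one]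
    nlinarith [normSq_nonneg (a := ω), sq_nonneg (normSq ω - 1), sq_nonneg (normSq ω + 1)]
  have hnφ : normSq φ = 1 := by
    have h2 : (normSq φ)^2 = 1 := by rw [← map_pow, hφ]; simp
    nlinarith [normSq_nonneg (a := φ)]
  have hnφ1 : normSq (φ - 1) = 2 := by
    have hsq : (φ - 1)^2 = -(φ + φ) := by
      have : (φ-1)^2 = φ^2 - (φ + φ) + 1 := by noncomm_ring
      rw [this, hφ]; abel
    have h2 : (normSq (φ-1))^2 = 4 := by
      rw [← map_pow, hsq, show -(φ+φ) = ((-2:ℝ):ℍ[ℝ]) * φ by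
          rw [Quaternion.coe_mul_eq_smul]; module,
        map_mul, normSq_coe, hnφ]
      norm_num
    nlinarith [normSq_nonneg (a := φ - 1)]
  have hφm10 : φ - 1 ≠ 0 := sub_ne_zero.mpr hφ1
  have hφp10 : φ + 1 ≠ 0 := by
    intro h; exact hφn1 (by rw [← add_neg_cancel_right φ 1, h]; abel)
  have hωmω2 : ω - ω^2 ≠ 0 := sub_ne_zero.mpr hωω2
  have hpow3 : ∀ n : ℕ, ω^n = ω^(n % 3) := by
    intro n
    conv_lhs => rw [← Nat.div_add_mod n 3]
    rw [pow_add, pow_mul, hω3, one_pow, one_mul]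
  have hpow4 : ∀ n : ℕ, φ^n = φ^(n % 4) := by
    intro n
    conv_lhs => rw [← Nat.div_add_mod n 4]
    rw [pow_add, pow_mul, hφ4, one_pow, one_mul]
  have homega : ∀ c < 3, ∀ c' < 3, ω^c = ω^(c':ℕ) → c = c' := by
    intro c hc c' hc' h
    interval_cases c <;> interval_cases c' <;>
      (try simp only [pow_zero, pow_one] at h) <;>
      first
        | rfl
        | exact absurd h hω1
        | exact absurd h.symm hω1
        | exact absurd h hω21
        | exact absurd h.symm hω21
        | exact absurd h hωω2
        | exact absurd h.symm hωω2
  -- `φ^f = ω^e` only trivially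
  have hfe : ∀ f < 4, ∀ e < 3, φ^f = ω^e → f = 0 ∧ e = 0 := by
    intro f hf e he h
    interval_cases f <;> interval_cases e <;>
        (try simp only [pow_zero, pow_one] at h)
    · exact ⟨rfl, rfl⟩
    · exact absurd h.symm hω1
    · exact absurd h.symm hω21
    · exact absurd h hφ1
    · exact absurd h hφω
    · exact absurd h hφω2
    · rw [hφ] at h; exact absurd h.symm h1n1
    · rw [hφ] at h; exact absurd h.symm hωn1
    · rw [hφ] at h; exact absurd h.symm hω2n1
    · -- φ^3 = 1
      have h4 : φ^4 = 1 * φ := by rw [pow_succ, h]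
      rw [hφ4, one_mul] at h4
      exact absurd h4.symm hφ1
    · -- φ^3 = ω
      have h4 : φ^4 = ω * φ := by rw [pow_succ, h]
      rw [hφ4] at h4
      have h5 : ω^2 = φ := by rw [← mul_one (ω^2), h4, ← mul_assoc, hA, one_mul]
      exact absurd h5.symm hφω2
    · -- φ^3 = ω^2
      have h4 : φ^4 = ω^2 * φ := by rw [pow_succ, h]
      rw [hφ4] at h4
      have h5 : ω = φ := by rw [← mul_one ω, h4, ← mul_assoc, hB, one_mul]
      exact absurd h5.symm hφω
  -- useful inequalities for second components
  have hcne : ∀ k : ℕ, (1:ℍ[ℝ]) ≠ (φ-1)*ω^k := by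
    intro k h
    have := congrArg normSq h
    rw [map_one, map_mul, hnφ1, map_pow, hnω, one_pow, mul_one] at this
    norm_num at this
  have hzne : ∀ k : ℕ, (φ-1)*ω^k ≠ 0 :=
    fun k => mul_ne_zero hφm10 (pow_ne_zero _ hω0)
  have hzne1 : (φ-1)*ω ≠ 0 := mul_ne_zero hφm10 hω0
  have hcne1 : (1:ℍ[ℝ]) ≠ (φ-1)*ω := by have := hcne 1; rwa [pow_one] at this
  -- second component rewriting identities
  have rC : (φ-1)*ω = ω^2*φ - ω := by rw [sub_mul, one_mul, hswap]
  have rD : (φ-1)*ω^2 = ω*φ - ω^2 := by rw [sub_mul, one_mul, hswap2]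
  -- ### the key freeness lemma
  have key : ∀ v : ℍ[ℝ], normSq v = 1 → ∀ r ∈ R, ∀ r' ∈ R,
      v * r.1 = r'.1 → v * r.2 = r'.2 → v = 1 ∧ r = r' := by
    intro v hv r hr r' hr' h1 h2
    have hv0 : v ≠ 0 := by intro h; rw [h, map_zero] at hv; norm_num at hv
    rw [hR] at hr hr'
    simp only [Set.mem_setOf_eq] at hr hr'
    -- a helper to identify v with a power of ω from the first components
    have vpow : ∀ c < 3, ∀ c' < 3, v * ω^c = ω^(c':ℕ) →
        v = ω^((c' + (3 - c)) % 3) := by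
      intro c hc c' hc' h
      rw [← hpow3]
      rw [pow_add, ← h, mul_assoc, ← pow_add, show c + (3-c) = 3 by omega, hω3, mul_one]
    obtain (rfl | ⟨c, hc, (rfl | rfl | rfl)⟩) := hr <;>
      obtain (rfl | ⟨c', hc', (rfl | rfl | rfl)⟩) := hr' <;>
      dsimp only at h1 h2
    -- (A,A)
    · refine ⟨mul_right_cancel₀ hωmω2 (h1.trans (one_mul _).symm), rfl⟩
    -- (A,B)
    · rw [mul_zero] at h2; exact absurd h2 zero_ne_one
    -- (A,C)
    · rw [mul_zero] at h2; exact absurd h2.symm hzne1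
    -- (A,D)
    · rw [mul_zero] at h2; exact absurd h2.symm (hzne 2)
    -- (B,A)
    · rw [mul_one] at h2
      rw [h2, map_zero] at hv; norm_num at hv
    -- (B,B)
    · rw [mul_one] at h2
      subst h2
      rw [one_mul] at h1
      obtain rfl := homega c hc c' hc' (mul_left_cancel₀ hφp10 h1)
      exact ⟨rfl, rfl⟩
    -- (B,C)
    · rw [mul_one] at h2
      have := congrArg normSq h2
      rw [hv, map_mul, hnφ1, hnω, mul_one] at this
      norm_num at this
    -- (B,D)
    · rw [mul_one] at h2
      have := congrArg normSq h2
      rw [hv, map_mul, hnφ1, map_pow, hnω, one_pow, mul_one] at this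
      norm_num at this
    -- (C,A)
    · exact absurd h2 (mul_ne_zero hv0 hzne1)
    -- (C,B)
    · have := congrArg normSq h2
      rw [map_mul, hv, map_mul, hnφ1, hnω, map_one, one_mul, mul_one] at this
      norm_num at this
    -- (C,C)
    · have hv1 : v = 1 := mul_right_cancel₀ hzne1 (h2.trans (one_mul _).symm)
      subst hv1
      rw [one_mul] at h1
      obtain rfl := homega c hc c' hc' h1
      exact ⟨rfl, rfl⟩
    -- (C,D)
    · have hv' := vpow c hc c' hc' h1
      have hm : (c' + (3-c)) % 3 = 0 ∨ (c' + (3-c)) % 3 = 1 ∨ (c' + (3-c)) % 3 = 2 := by omega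
      rcases hm with hm | hm | hm <;> rw [hm] at hv'
      · rw [pow_zero] at hv'; rw [hv', one_mul] at h2
        exact absurd (mul_left_cancel₀ hφm10 h2) hωω2
      · rw [pow_one] at hv'; rw [hv'] at h2
        have l : ω * ((φ-1)*ω) = φ - ω^2 := by
          rw [sub_mul, one_mul, mul_sub, ← mul_assoc, hωφω, ← sq]
        rw [l, rD] at h2
        have h3 : (1:ℍ[ℝ]) * φ = ω * φ := by
          rw [one_mul]; exact sub_left_inj.mp h2
        exact absurd (mul_right_cancel₀ hφ0 h3).symm hω1
      · rw [hv'] at h2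
        have l : ω^2 * ((φ-1)*ω) = ω*φ - 1 := by
          rw [sub_mul, one_mul, mul_sub, hswap, ← mul_assoc, h22, hA]
        rw [l, rD] at h2
        exact absurd (sub_right_inj.mp h2).symm hω21
    -- (D,A)
    · exact absurd h2 (mul_ne_zero hv0 (hzne 2))
    -- (D,B)
    · have := congrArg normSq h2
      rw [map_mul, hv, map_mul, hnφ1, map_pow, hnω, one_pow, map_one, one_mul, mul_one] at this
      norm_num at this
    -- (D,C)
    · have hv' := vpow c hc c' hc' h1
      have hm : (c' + (3-c)) % 3 = 0 ∨ (c' + (3-c)) % 3 = 1 ∨ (c' + (3-c)) % 3 = 2 := by omega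
      rcases hm with hm | hm | hm <;> rw [hm] at hv'
      · rw [pow_zero] at hv'; rw [hv', one_mul] at h2
        exact absurd (mul_left_cancel₀ hφm10 h2).symm hωω2
      · rw [pow_one] at hv'; rw [hv'] at h2
        have l : ω * ((φ-1)*ω^2) = ω^2*φ - 1 := by
          rw [sub_mul, one_mul, mul_sub, hswap2, ← mul_assoc, ← sq, hB]
        rw [l, rC] at h2
        exact absurd (sub_right_inj.mp h2).symm hω1
      · rw [hv'] at h2
        have l : ω^2 * ((φ-1)*ω^2) = φ - ω := by
          rw [sub_mul, one_mul, mul_sub, hswap2, ← mul_assoc, hA, one_mul, h22]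
        rw [l, rC] at h2
        have h3 : (1:ℍ[ℝ]) * φ = ω^2 * φ := by
          rw [one_mul]; exact sub_left_inj.mp h2
        exact absurd (mul_right_cancel₀ hφ0 h3).symm hω21
    -- (D,D)
    · have hv1 : v = 1 := mul_right_cancel₀ (hzne 2) (h2.trans (one_mul _).symm)
      subst hv1
      rw [one_mul] at h1
      obtain rfl := homega c hc c' hc' h1
      exact ⟨rfl, rfl⟩
  -- ### range descriptions
  have hmemR : ∀ i, O1r ω φ i ∈ R := by
    intro i
    rw [hR]
    simp only [Set.mem_setOf_eq]
    rcases i with _ | ⟨c, t⟩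
    · exact Or.inl rfl
    · fin_cases t
      · exact Or.inr ⟨(c:ℕ), c.isLt, Or.inl rfl⟩
      · exact Or.inr ⟨(c:ℕ), c.isLt, Or.inr (Or.inl rfl)⟩
      · exact Or.inr ⟨(c:ℕ), c.isLt, Or.inr (Or.inr rfl)⟩
  have hUrange : U = Set.range (O1g ω φ) := by
    rw [hU]; ext q
    simp only [Set.mem_setOf_eq, Set.mem_range]
    constructor
    · rintro ⟨a, ha, b, hb, rfl⟩
      exact ⟨(⟨a, ha⟩, ⟨b, hb⟩), rfl⟩
    · rintro ⟨⟨a, b⟩, rfl⟩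
      exact ⟨a, a.isLt, b, b.isLt, rfl⟩
  have hRrange : R = Set.range (O1r ω φ) := by
    ext p
    simp only [Set.mem_range]
    constructor
    · intro hp
      rw [hR] at hp
      simp only [Set.mem_setOf_eq] at hp
      obtain (rfl | ⟨c, hc, (rfl | rfl | rfl)⟩) := hp
      · exact ⟨none, rfl⟩
      · exact ⟨some (⟨c, hc⟩, 0), rfl⟩
      · exact ⟨some (⟨c, hc⟩, 1), rfl⟩
      · exact ⟨some (⟨c, hc⟩, 2), rfl⟩
    · rintro ⟨i, rfl⟩
      exact hmemR i
  -- ### injectivity of the two index maps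
  have hginj : Function.Injective (O1g ω φ) := by
    intro p p' hpp
    simp only [O1g] at hpp
    have ha := p.1.isLt
    have hb := p.2.isLt
    have ha' := p'.1.isLt
    have hb' := p'.2.isLt
    have e1 : ω^(p.1:ℕ) * φ^((p.2:ℕ)+(4-(p'.2:ℕ))) = ω^(p'.1:ℕ) := by
      rw [pow_add, ← mul_assoc, hpp, mul_assoc, ← pow_add,
        show ((p'.2:ℕ)+(4-(p'.2:ℕ))) = 4 by omega, hφ4, mul_one]
    have e2 : ω^(3-(p.1:ℕ)) * (ω^(p.1:ℕ) * φ^((p.2:ℕ)+(4-(p'.2:ℕ)))) =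
        ω^(3-(p.1:ℕ)) * ω^(p'.1:ℕ) := by rw [e1]
    rw [← mul_assoc, ← pow_add, show (3-(p.1:ℕ))+(p.1:ℕ) = 3 by omega, hω3, one_mul,
      ← pow_add] at e2
    rw [hpow4 ((p.2:ℕ)+(4-(p'.2:ℕ))), hpow3 ((3-(p.1:ℕ))+(p'.1:ℕ))] at e2
    obtain ⟨hf, he⟩ := hfe _ (Nat.mod_lt _ (by norm_num)) _ (Nat.mod_lt _ (by norm_num)) e2
    have h1' : (p.1:ℕ) = (p'.1:ℕ) := by omega
    have h2' : (p.2:ℕ) = (p'.2:ℕ) := by omega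
    exact Prod.ext (Fin.val_injective h1') (Fin.val_injective h2')
  have hrinj : Function.Injective (O1r ω φ) := by
    rintro (_ | ⟨c, t⟩) (_ | ⟨c', t'⟩) hii
    · rfl
    · exfalso
      fin_cases t'
      · exact zero_ne_one (congrArg Prod.snd hii)
      · exact hzne1 (congrArg Prod.snd hii).symm
      · exact hzne 2 (congrArg Prod.snd hii).symm
    · exfalso
      fin_cases t
      · exact zero_ne_one (congrArg Prod.snd hii).symm
      · exact hzne1 (congrArg Prod.snd hii)
      · exact hzne 2 (congrArg Prod.snd hii)
    · fin_cases t <;> fin_cases t'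
      · have h1 : (φ+1)*ω^(c:ℕ) = (φ+1)*ω^(c':ℕ) := congrArg Prod.fst hii
        obtain rfl : c = c' :=
          Fin.val_injective (homega _ c.isLt _ c'.isLt (mul_left_cancel₀ hφp10 h1))
        rfl
      · exact absurd (congrArg Prod.snd hii) hcne1
      · exact absurd (congrArg Prod.snd hii) (hcne 2)
      · exact absurd (congrArg Prod.snd hii).symm hcne1
      · have h1 : ω^(c:ℕ) = ω^(c':ℕ) := congrArg Prod.fst hii
        obtain rfl : c = c' := Fin.val_injective (homega _ c.isLt _ c'.isLt h1)
        rfl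
      · have h2 : (φ-1)*ω = (φ-1)*ω^2 := congrArg Prod.snd hii
        exact absurd (mul_left_cancel₀ hφm10 h2) hωω2
      · exact absurd (congrArg Prod.snd hii).symm (hcne 2)
      · have h2 : (φ-1)*ω = (φ-1)*ω^2 := (congrArg Prod.snd hii).symm
        exact absurd (mul_left_cancel₀ hφm10 h2) hωω2
      · have h1 : ω^(c:ℕ) = ω^(c':ℕ) := congrArg Prod.fst hii
        obtain rfl : c = c' := Fin.val_injective (homega _ c.isLt _ c'.isLt h1)
        rfl
  -- ### injectivity of the full map
  have hwinv : ∀ p : Fin 3 × Fin 4, (φ^(4-(p.2:ℕ)) * ω^(3-(p.1:ℕ))) * O1g ω φ p = 1 := by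
    intro p
    have ha := p.1.isLt
    have hb := p.2.isLt
    simp only [O1g]
    rw [mul_assoc, ← mul_assoc (ω^(3-(p.1:ℕ))), ← pow_add,
      show (3-(p.1:ℕ))+(p.1:ℕ) = 3 by omega, hω3, one_mul, ← pow_add,
      show (4-(p.2:ℕ))+(p.2:ℕ) = 4 by omega, hφ4]
  have hnsg : ∀ p, normSq (O1g ω φ p) = 1 := by
    intro p; simp [O1g, map_mul, map_pow, hnω, hnφ]
  have hnsw : ∀ p : Fin 3 × Fin 4, normSq (φ^(4-(p.2:ℕ)) * ω^(3-(p.1:ℕ))) = 1 := by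
    intro p; simp [map_mul, map_pow, hnω, hnφ]
  have hFinj : Function.Injective (O1F ω φ) := by
    rintro ⟨p, i⟩ ⟨p', i'⟩ hF
    simp only [O1F, Prod.mk.injEq] at hF
    obtain ⟨hF1, hF2⟩ := hF
    have hw1 : (φ^(4-(p'.2:ℕ)) * ω^(3-(p'.1:ℕ))) * O1g ω φ p' = 1 := hwinv p'
    set w := φ^(4-(p'.2:ℕ)) * ω^(3-(p'.1:ℕ)) with hwdef
    have hv1 : (w * O1g ω φ p) * (O1r ω φ i).1 = (O1r ω φ i').1 := by
      rw [mul_assoc, hF1, ← mul_assoc, hw1, one_mul]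
    have hv2 : (w * O1g ω φ p) * (O1r ω φ i).2 = (O1r ω φ i').2 := by
      rw [mul_assoc, hF2, ← mul_assoc, hw1, one_mul]
    have hns : normSq (w * O1g ω φ p) = 1 := by
      rw [map_mul, hnsw p', hnsg p, one_mul]
    obtain ⟨hv, hr⟩ := key _ hns _ (hmemR i) _ (hmemR i') hv1 hv2
    have hgg : O1g ω φ p = O1g ω φ p' := by
      have h0 : w * O1g ω φ p = w * O1g ω φ p' := by rw [hv, hw1]
      exact mul_left_cancel₀ (left_ne_zero_of_mul_eq_one hw1) h0
    exact Prod.ext (hginj hgg) (hrinj hr)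
  -- ### conclusion
  have hSrange : {p : ℍ[ℝ] × ℍ[ℝ] | ∃ u ∈ U, ∃ r ∈ R, p = (u * r.1, u * r.2)} =
      Set.range (O1F ω φ) := by
    ext x
    simp only [Set.mem_setOf_eq, Set.mem_range]
    constructor
    · rintro ⟨u, hu, r, hr, rfl⟩
      rw [hUrange] at hu
      obtain ⟨p, rfl⟩ := hu
      rw [hRrange] at hr
      obtain ⟨i, rfl⟩ := hr
      exact ⟨(p, i), rfl⟩
    · rintro ⟨⟨p, i⟩, rfl⟩
      exact ⟨O1g ω φ p, by rw [hUrange]; exact ⟨p, rfl⟩, O1r ω φ i,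
        by rw [hRrange]; exact ⟨i, rfl⟩, rfl⟩
  rw [hSrange, Nat.card_range_of_injective hFinj]
  simp [Nat.card_eq_fintype_card]
end

section
/- Let τ = (1+√5)/2 and σ = (1−√5)/2, and define the quaternions f = i, g = (−1+i+j+k)/2, and h = (i − σj − τk)/2. Then f² = h² = (gh)² = −1 and g³ = (fg)³ = (fh)³ = 1. -/
open Quaternion

/-!
Every quaternion satisfies `q² = 2 Re(q) q - |q|²`. Hence a unit quaternion squares to `-1` when
`Re q = 0`, and satisfies `q² + q + 1 = 0`, so `q³ = 1`, when `Re q = -1/2`. Since `|·|²` is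
multiplicative, the six relations reduce to the real parts of `f, h, gh, g, fg, fh` and the norms of
`f, g, h`, in which `σ` and `τ` enter only through `σ + τ = 1` and `στ = -1`.
-/

noncomputable def quatI : ℍ[ℝ] := ⟨0, 1, 0, 0⟩

noncomputable def quatJ : ℍ[ℝ] := ⟨0, 0, 1, 0⟩

noncomputable def quatK : ℍ[ℝ] := ⟨0, 0, 0, 1⟩

namespace Quaternion

section CommRing

variable {R : Type*} [CommRing R]

theorem sq_eq_two_re_mul_sub_normSq (a : ℍ[R]) : a ^ 2 = ↑(2 * a.re) * a - ↑(normSq a) := by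
  rw [← self_mul_star, star_eq_two_re_sub, mul_sub, coe_commutes, sq, sub_sub_cancel]

theorem sq_eq_neg_one_of_re_eq_zero {a : ℍ[R]} (hre : a.re = 0) (hnorm : normSq a = 1) :
    a ^ 2 = -1 := by
  simp [sq_eq_two_re_mul_sub_normSq, hre, hnorm]

theorem pow_three_eq_one_of_two_mul_re_eq_neg_one {a : ℍ[R]} (hre : 2 * a.re = -1)
    (hnorm : normSq a = 1) : a ^ 3 = 1 := by
  have hsq : a ^ 2 = -a - 1 := by simp [sq_eq_two_re_mul_sub_normSq, hre, hnorm, sub_eq_add_neg]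
  rw [pow_succ, hsq, sub_mul, neg_mul, one_mul, ← sq, hsq]
  abel

end CommRing

theorem div_two_eq_inv_two_smul {K : Type*} [Field K] [LinearOrder K] [IsStrictOrderedRing K]
    (a : ℍ[K]) : a / 2 = (2⁻¹ : K) • a := by
  rw [div_eq_mul_inv, ← mul_coe_eq_smul, coe_inv]
  rfl

end Quaternion

/-- With `τ = (1+√5)/2`, `σ = (1−√5)/2`, the quaternions `f = i`, `g = (−1+i+j+k)/2` and
`h = (i − σj − τk)/2` satisfy `f² = h² = (gh)² = −1` and `g³ = (fg)³ = (fh)³ = 1`. -/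
theorem binary_icosahedral_generator_relations (τ σ : ℝ)
    (hτ : τ = (1 + Real.sqrt 5) / 2) (hσ : σ = (1 - Real.sqrt 5) / 2)
    (f g h : ℍ[ℝ])
    (hf : f = quatI)
    (hg : g = (-1 + quatI + quatJ + quatK) / 2)
    (hh : h = (quatI - σ • quatJ - τ • quatK) / 2) :
    f ^ 2 = -1 ∧ h ^ 2 = -1 ∧ (g * h) ^ 2 = -1 ∧
    g ^ 3 = 1 ∧ (f * g) ^ 3 = 1 ∧ (f * h) ^ 3 = 1 := by
  have hsum : σ + τ = 1 := by rw [hσ, hτ]; ring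
  have hprod : σ * τ = -1 := by rw [hσ, hτ]; exact Real.goldenConj_mul_goldenRatio
  have hre : f.re = 0 ∧ h.re = 0 ∧ (g * h).re = 0 ∧
      2 * g.re = -1 ∧ 2 * (f * g).re = -1 ∧ 2 * (f * h).re = -1 := by
    subst hf hg hh
    refine ⟨rfl, ?_, ?_, ?_, ?_, ?_⟩ <;> simp [div_two_eq_inv_two_smul] <;>
      norm_num [quatI, quatJ, quatK]
    linear_combination hsum / 2
  have hnorm : normSq f = 1 ∧ normSq g = 1 ∧ normSq h = 1 := by
    subst hf hg hh
    refine ⟨?_, ?_, ?_⟩ <;> simp [normSq_def', div_two_eq_inv_two_smul] <;>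
      norm_num [quatI, quatJ, quatK]
    linear_combination (σ + τ + 1) / 4 * hsum - 1 / 2 * hprod
  obtain ⟨hf_re, hh_re, hgh_re, hg_re, hfg_re, hfh_re⟩ := hre
  obtain ⟨hf_norm, hg_norm, hh_norm⟩ := hnorm
  exact ⟨sq_eq_neg_one_of_re_eq_zero hf_re hf_norm,
    sq_eq_neg_one_of_re_eq_zero hh_re hh_norm,
    sq_eq_neg_one_of_re_eq_zero hgh_re (by simp [hg_norm, hh_norm]),
    pow_three_eq_one_of_two_mul_re_eq_neg_one hg_re hg_norm,
    pow_three_eq_one_of_two_mul_re_eq_neg_one hfg_re (by simp [hf_norm, hg_norm]),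
    pow_three_eq_one_of_two_mul_re_eq_neg_one hfh_re (by simp [hf_norm, hh_norm])⟩
end

section
/- Let τ = (1+√5)/2 and σ = (1−√5)/2. The subgroup of the group of units of the real quaternions generated by the three elements i, (−1+i+j+k)/2, and (i − σj − τk)/2 has exactly 120 elements (it is the binary icosahedral group). -/
open Quaternion

/-!
All three generators have coordinates in `ℚ(φ) = QuadraticAlgebra ℚ 1 1`, where `φ = τ` and
`σ = 1 - φ`, so the group can be computed exactly inside `ℍ[ℚ(φ)]`, which embeds into `ℍ[ℝ]`.
Write `x = i`, `y = (-1 + i + j + k)/2`, `z = (i - σj - τk)/2`. The words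
`x^a (y x y²)^b y^c (x y z)^d` with `a < 4`, `b < 2`, `c < 3`, `d < 5` form a normal form for the
group: `y x y² = k`, so the first two factors run through `Q₈ = {±1, ±i, ±j, ±k}`, the first three
through the 24 Hurwitz units, and `x y z` has order 10, so its powers below 5 represent the five
cosets of the Hurwitz units. An exact computation shows that these 120 words are distinct and that
left multiplication by each generator permutes them; since they contain `1`, they are the whole
generated subgroup.
-/

open Function

instance Quaternion.instDecidableEq {R : Type*} [CommRing R] [DecidableEq R] :
    DecidableEq ℍ[R] :=
  (QuaternionAlgebra.equivProd _ _ _).decidableEq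

namespace Quaternion

variable {R S : Type*} [CommRing R] [CommRing S]

def map (e : R → S) (x : ℍ[R]) : ℍ[S] := ⟨e x.re, e x.imI, e x.imJ, e x.imK⟩

@[simp] theorem map_re (e : R → S) (x : ℍ[R]) : (map e x).re = e x.re := rfl
@[simp] theorem map_imI (e : R → S) (x : ℍ[R]) : (map e x).imI = e x.imI := rfl
@[simp] theorem map_imJ (e : R → S) (x : ℍ[R]) : (map e x).imJ = e x.imJ := rfl
@[simp] theorem map_imK (e : R → S) (x : ℍ[R]) : (map e x).imK = e x.imK := rfl

theorem map_injective {e : R → S} (he : Injective e) : Injective (map e) := fun x y hxy => by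
  obtain ⟨h₁, h₂, h₃, h₄⟩ := QuaternionAlgebra.mk.inj hxy
  exact QuaternionAlgebra.ext (he h₁) (he h₂) (he h₃) (he h₄)

def mapRingHom (e : R →+* S) : ℍ[R] →+* ℍ[S] where
  toFun := map e
  map_one' := by ext <;> simp
  map_mul' x y := by ext <;> simp
  map_zero' := by ext <;> simp
  map_add' x y := by ext <;> simp

@[simp] theorem mapRingHom_apply (e : R →+* S) (x : ℍ[R]) : mapRingHom e x = map e x := rfl

theorem div_two_eq_smul (x : ℍ[ℝ]) : x / 2 = (2⁻¹ : ℝ) • x := by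
  rw [show (2 : ℍ[ℝ]) = ((2 : ℝ) : ℍ[ℝ]) by norm_cast, div_eq_mul_inv, ← coe_inv, mul_coe_eq_smul]

end Quaternion

theorem QuadraticAlgebra.lift_injective_of_irrational {a b : ℚ} {u : ℝ}
    (hu : u * u = a • 1 + b • u) (hirr : Irrational u) :
    Injective (lift ⟨u, hu⟩ : QuadraticAlgebra ℚ a b →ₐ[ℚ] ℝ) := by
  rw [injective_iff_map_eq_zero]
  intro z hz
  simp only [lift_apply_apply, Rat.smul_def, mul_one] at hz
  by_cases him : z.im = 0
  · ext
    · simpa [him] using hz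
    · exact him
  · exact absurd ⟨-z.re / z.im, by push_cast; field_simp; linarith⟩ hirr

noncomputable def goldenEmbedding : QuadraticAlgebra ℚ 1 1 →ₐ[ℚ] ℝ :=
  QuadraticAlgebra.lift ⟨Real.goldenRatio, by simp [← sq, Real.goldenRatio_sq, add_comm]⟩

theorem goldenEmbedding_apply (z : QuadraticAlgebra ℚ 1 1) :
    goldenEmbedding z = z.re + z.im * Real.goldenRatio := by
  simp [goldenEmbedding, Rat.smul_def]

theorem goldenEmbedding_injective : Injective goldenEmbedding :=
  QuadraticAlgebra.lift_injective_of_irrational _ Real.goldenRatio_irrational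

theorem Subgroup.coe_closure_eq_of_mul_mem {G : Type*} [Group G] {s T : Set G} (hT : T.Finite)
    (h1 : 1 ∈ T) (hmul : ∀ g ∈ s, ∀ x ∈ T, g * x ∈ T) (hTs : T ⊆ closure s) :
    (closure s : Set G) = T := by
  refine subset_antisymm (fun u hu => ?_) hTs
  induction hu using closure_induction_left with
  | one => exact h1
  | mul_left g hg x _ hx => exact hmul g hg x hx
  | inv_mul_cancel g hg x _ hx =>
    -- left multiplication by `g` maps the finite set `T` injectively into itself, hence onto it
    obtain ⟨y, hy, rfl⟩ := ((hT.injOn_iff_bijOn_of_mapsTo (hmul g hg)).1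
      (mul_right_injective g).injOn).surjOn hx
    simpa using hy

section IcosianWords

variable {M : Type*} [Monoid M]

def icosianWords (x y z : M) : List M :=
  (List.range 4 ×ˢ List.range 2 ×ˢ List.range 3 ×ˢ List.range 5).map fun (a, b, c, d) =>
    x ^ a * (y * x * y * y) ^ b * y ^ c * (x * y * z) ^ d

theorem one_mem_icosianWords (x y z : M) : 1 ∈ icosianWords x y z :=
  List.mem_map.2 ⟨(0, 0, 0, 0), by decide, by simp⟩

theorem map_icosianWords {N F : Type*} [Monoid N] [FunLike F M N] [MonoidHomClass F M N]
    (φ : F) (x y z : M) : (icosianWords x y z).map φ = icosianWords (φ x) (φ y) (φ z) := by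
  simp [icosianWords, comp_def]

theorem mem_of_mem_icosianWords {S : Type*} [SetLike S M] [SubmonoidClass S M] {H : S}
    {x y z u : M} (hx : x ∈ H) (hy : y ∈ H) (hz : z ∈ H) (hu : u ∈ icosianWords x y z) : u ∈ H := by
  obtain ⟨⟨a, b, c, d⟩, -, rfl⟩ := List.mem_map.1 hu
  have hk : y * x * y * y ∈ H := mul_mem (mul_mem (mul_mem hy hx) hy) hy
  have hw : x * y * z ∈ H := mul_mem (mul_mem hx hy) hz
  exact mul_mem (mul_mem (mul_mem (pow_mem hx a) (pow_mem hk b)) (pow_mem hy c)) (pow_mem hw d)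

end IcosianWords

def icosianI : ℍ[QuadraticAlgebra ℚ 1 1] := ⟨0, 1, 0, 0⟩

def icosianG : ℍ[QuadraticAlgebra ℚ 1 1] := ⟨⟨-1/2, 0⟩, ⟨1/2, 0⟩, ⟨1/2, 0⟩, ⟨1/2, 0⟩⟩

def icosianH : ℍ[QuadraticAlgebra ℚ 1 1] := ⟨0, ⟨1/2, 0⟩, ⟨-1/2, 1/2⟩, ⟨0, -1/2⟩⟩

def icosians : List ℍ[QuadraticAlgebra ℚ 1 1] := icosianWords icosianI icosianG icosianH

theorem icosians_nodup : icosians.Nodup := by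
  decide +kernel

theorem mul_mem_icosians :
    ∀ x ∈ [icosianI, icosianG, icosianH], ∀ y ∈ icosians, x * y ∈ icosians := by
  decide +kernel

noncomputable def icosianEmbedding : ℍ[QuadraticAlgebra ℚ 1 1] →+* ℍ[ℝ] :=
  Quaternion.mapRingHom goldenEmbedding.toRingHom

theorem icosianEmbedding_injective : Injective icosianEmbedding :=
  Quaternion.map_injective goldenEmbedding_injective

theorem icosianEmbedding_icosianI : icosianEmbedding icosianI = quatI := by
  ext <;> simp [icosianEmbedding, goldenEmbedding_apply] <;>
    simp [icosianI, quatI, QuadraticAlgebra.re_one, QuadraticAlgebra.im_one]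

theorem icosianEmbedding_icosianG :
    icosianEmbedding icosianG = (-1 + quatI + quatJ + quatK) / 2 := by
  rw [Quaternion.div_two_eq_smul]
  ext <;> simp [icosianEmbedding, goldenEmbedding_apply] <;> simp [icosianG, quatI, quatJ, quatK]
  norm_num

theorem icosianEmbedding_icosianH : icosianEmbedding icosianH =
    (quatI - Real.goldenConj • quatJ - Real.goldenRatio • quatK) / 2 := by
  rw [Quaternion.div_two_eq_smul, ← Real.one_sub_goldenConj]
  ext <;> simp [icosianEmbedding, goldenEmbedding_apply] <;> simp [icosianH, quatI, quatJ, quatK]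
    <;> ring

section Transfer

variable {f g h : ℍ[ℝ]ˣ} (hf : (f : ℍ[ℝ]) = icosianEmbedding icosianI)
  (hg : (g : ℍ[ℝ]) = icosianEmbedding icosianG) (hh : (h : ℍ[ℝ]) = icosianEmbedding icosianH)
include hf hg hh

theorem map_val_icosianWords :
    (icosianWords f g h).map Units.val = icosians.map icosianEmbedding := by
  rw [icosians, map_icosianWords, ← hf, ← hg, ← hh]
  exact map_icosianWords (Units.coeHom _) f g h

theorem coe_closure_eq_icosianWords :
    (Subgroup.closure {f, g, h} : Set ℍ[ℝ]ˣ) = {u | u ∈ icosianWords f g h} := by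
  have hmem (u : ℍ[ℝ]ˣ) : u ∈ icosianWords f g h ↔
      (u : ℍ[ℝ]) ∈ icosians.map icosianEmbedding := by
    rw [← map_val_icosianWords hf hg hh, List.mem_map_of_injective Units.val_injective]
  refine Subgroup.coe_closure_eq_of_mul_mem (List.finite_toSet _) (one_mem_icosianWords f g h)
    ?_ fun u => mem_of_mem_icosianWords (Subgroup.subset_closure (by simp))
      (Subgroup.subset_closure (by simp)) (Subgroup.subset_closure (by simp))
  rintro x hx u hu
  obtain ⟨x', hx', hxx'⟩ : ∃ x' ∈ [icosianI, icosianG, icosianH], icosianEmbedding x' = x := by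
    rcases hx with rfl | rfl | rfl <;> simp [hf, hg, hh]
  obtain ⟨y, hy, hyu⟩ := List.mem_map.1 ((hmem u).1 hu)
  refine (hmem _).2 (List.mem_map.2 ⟨x' * y, mul_mem_icosians x' hx' y hy, ?_⟩)
  rw [map_mul, hyu, hxx', Units.val_mul]

theorem nodup_icosianWords : (icosianWords f g h).Nodup := by
  refine List.Nodup.of_map Units.val ?_
  rw [map_val_icosianWords hf hg hh]
  exact icosians_nodup.map icosianEmbedding_injective

end Transfer

/-- With `τ = (1+√5)/2`, `σ = (1−√5)/2`, the subgroup of `ℍˣ` generated by `i`,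
`(−1+i+j+k)/2` and `(i − σj − τk)/2` has exactly 120 elements
(it is the binary icosahedral group). -/
theorem binary_icosahedral_group_order_120 (τ σ : ℝ)
    (hτ : τ = (1 + Real.sqrt 5) / 2) (hσ : σ = (1 - Real.sqrt 5) / 2)
    (f g h : ℍ[ℝ]ˣ)
    (hf : (f : ℍ[ℝ]) = quatI)
    (hg : (g : ℍ[ℝ]) = (-1 + quatI + quatJ + quatK) / 2)
    (hh : (h : ℍ[ℝ]) = (quatI - σ • quatJ - τ • quatK) / 2) :
    Nat.card (Subgroup.closure ({f, g, h} : Set ℍ[ℝ]ˣ)) = 120 := by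
  subst hτ hσ
  have hf' := hf.trans icosianEmbedding_icosianI.symm
  have hg' := hg.trans icosianEmbedding_icosianG.symm
  have hh' := hh.trans icosianEmbedding_icosianH.symm
  rw [← SetLike.coe_sort_coe, coe_closure_eq_icosianWords hf' hg' hh', ← List.coe_toFinset,
    Nat.card_coe_set_eq, Set.ncard_coe_finset,
    List.toFinset_card_of_nodup (nodup_icosianWords hf' hg' hh')]
  rfl
end

section
/- Let τ = (1+√5)/2 and σ = (1−√5)/2. The subgroup of the group of units of the real quaternions generated by the two elements g = (−1+i+j+k)/2 and h = (i − σj − τk)/2 has exactly 12 elements. -/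
open Quaternion

/-!
If `h` normalizes the finite cyclic group `⟨g⟩`, then `⟨g, h⟩ = ⟨h⟩⟨g⟩` has at most
`ord g * ord h` elements, and it has at least that many when the two orders are coprime,
since both divide its order. For the quaternions in question `g³ = 1`, `h² = -1` and
`h g h⁻¹ = g²`, the last two because `σ + τ = 1` and `σ² + τ² = 3`.
-/

open Subgroup
open scoped Pointwise

theorem Subgroup.mem_normalizer_zpowers_of_conj_mem {G : Type*} [Group G] {g h : G}
    (hg : IsOfFinOrder g) (hconj : h * g * h⁻¹ ∈ zpowers g) :
    h ∈ normalizer (zpowers g : Set G) := by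
  have : Finite (zpowers g : Set G) := hg.finite_zpowers
  refine mem_normalizer_fintype fun n hn => ?_
  obtain ⟨k, rfl⟩ := mem_zpowers_iff.mp hn
  rw [← conj_zpow]
  exact zpow_mem hconj k

theorem Subgroup.natCard_closure_pair_of_conj_mem_zpowers {G : Type*} [Group G] {g h : G}
    (hg : IsOfFinOrder g) (hh : IsOfFinOrder h) (hconj : h * g * h⁻¹ ∈ zpowers g)
    (hcop : (orderOf g).Coprime (orderOf h)) :
    Nat.card (closure {g, h}) = orderOf g * orderOf h := by
  have hsup : closure {g, h} = zpowers h ⊔ zpowers g := by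
    rw [Set.insert_eq, closure_union, ← zpowers_eq_closure, ← zpowers_eq_closure, sup_comm]
  have hcarrier : (closure {g, h} : Set G) = (zpowers h : Set G) * zpowers g := by
    rw [hsup, coe_mul_of_left_le_normalizer_right _ _
      (zpowers_le.mpr (mem_normalizer_zpowers_of_conj_mem hg hconj))]
  have hle : Nat.card (closure {g, h}) ≤ orderOf g * orderOf h := by
    rw [← SetLike.coe_sort_coe, hcarrier, mul_comm, ← Nat.card_zpowers, ← Nat.card_zpowers]
    exact Set.natCard_mul_le
  have : Finite (closure {g, h}) := by
    rw [← SetLike.coe_sort_coe, hcarrier]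
    exact (hh.finite_zpowers.mul hg.finite_zpowers).to_subtype
  have hdvd : orderOf g * orderOf h ∣ Nat.card (closure {g, h}) :=
    hcop.mul_dvd_of_dvd_of_dvd (orderOf_dvd_natCard _ (subset_closure (by simp)))
      (orderOf_dvd_natCard _ (subset_closure (by simp)))
  exact le_antisymm hle (Nat.le_of_dvd Nat.card_pos hdvd)

theorem orderOf_eq_four_of_sq_eq_neg_one {R : Type*} [Ring R] {x : R} (hR : (-1 : R) ≠ 1)
    (hx : x ^ 2 = -1) : orderOf x = 4 :=
  orderOf_eq_prime_pow (p := 2) (n := 1) (by rwa [pow_one, hx])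
    (by rw [show 2 ^ (1 + 1) = 2 * 2 by rfl, pow_mul, hx, neg_one_sq])

theorem Quaternion.neg_one_ne_one : (-1 : ℍ[ℝ]) ≠ 1 :=
  ne_of_apply_ne QuaternionAlgebra.re (by norm_num)

theorem Quaternion.div_two_eq_smul_s12 (q : ℍ[ℝ]) : q / 2 = (2⁻¹ : ℝ) • q := by
  rw [← mul_coe_eq_smul, coe_inv]
  rfl

theorem neg_one_add_quatI_add_quatJ_add_quatK_div_two :
    (-1 + quatI + quatJ + quatK) / 2 = (⟨-1/2, 1/2, 1/2, 1/2⟩ : ℍ[ℝ]) := by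
  rw [div_two_eq_smul_s12]
  -- the projections must be distributed before `quatI`, … are unfolded, or `simp` gets stuck
  ext <;> simp <;> simp [quatI, quatJ, quatK]
  norm_num

theorem quatI_sub_smul_quatJ_sub_smul_quatK_div_two (σ τ : ℝ) :
    (quatI - σ • quatJ - τ • quatK) / 2 = (⟨0, 1/2, -σ/2, -τ/2⟩ : ℍ[ℝ]) := by
  rw [div_two_eq_smul_s12]
  ext <;> simp <;> simp [quatI, quatJ, quatK] <;> ring

theorem orderOf_quat_g : orderOf (⟨-1/2, 1/2, 1/2, 1/2⟩ : ℍ[ℝ]) = 3 := by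
  have : Fact (Nat.Prime 3) := ⟨Nat.prime_three⟩
  refine orderOf_eq_prime ?_ (ne_of_apply_ne QuaternionAlgebra.re (by norm_num))
  ext <;> simp [pow_succ] <;> norm_num

section

variable {σ τ : ℝ}

theorem quat_h_sq (hnorm : σ ^ 2 + τ ^ 2 = 3) :
    (⟨0, 1/2, -σ/2, -τ/2⟩ : ℍ[ℝ]) ^ 2 = -1 := by
  ext <;> simp [pow_two]
  case re => linear_combination -hnorm / 4
  all_goals ring

theorem quat_h_mul_g (hsum : σ + τ = 1) :
    (⟨0, 1/2, -σ/2, -τ/2⟩ : ℍ[ℝ]) * ⟨-1/2, 1/2, 1/2, 1/2⟩ =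
      (⟨-1/2, 1/2, 1/2, 1/2⟩ : ℍ[ℝ]) ^ 2 * ⟨0, 1/2, -σ/2, -τ/2⟩ := by
  ext <;> simp [pow_two]
  case re => linear_combination hsum / 2
  all_goals ring

end

/-- With `τ = (1+√5)/2`, `σ = (1−√5)/2`, the subgroup of `ℍˣ` generated by
`g = (−1+i+j+k)/2` and `h = (i − σj − τk)/2` has exactly 12 elements. -/
theorem dicyclic_subgroup_order_12 (τ σ : ℝ)
    (hτ : τ = (1 + Real.sqrt 5) / 2) (hσ : σ = (1 - Real.sqrt 5) / 2)
    (g h : ℍ[ℝ]ˣ)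
    (hg : (g : ℍ[ℝ]) = (-1 + quatI + quatJ + quatK) / 2)
    (hh : (h : ℍ[ℝ]) = (quatI - σ • quatJ - τ • quatK) / 2) :
    Nat.card (Subgroup.closure ({g, h} : Set ℍ[ℝ]ˣ)) = 12 := by
  rw [neg_one_add_quatI_add_quatJ_add_quatK_div_two] at hg
  rw [quatI_sub_smul_quatJ_sub_smul_quatK_div_two] at hh
  have hsum : σ + τ = 1 := by rw [hσ, hτ]; ring
  have hnorm : σ ^ 2 + τ ^ 2 = 3 := by
    rw [hσ, hτ]
    nlinarith [Real.sq_sqrt (show (0 : ℝ) ≤ 5 by norm_num)]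
  have ord_g : orderOf g = 3 := by rw [← orderOf_units, hg]; exact orderOf_quat_g
  have ord_h : orderOf h = 4 := by
    rw [← orderOf_units, hh]
    exact orderOf_eq_four_of_sq_eq_neg_one neg_one_ne_one (quat_h_sq hnorm)
  have hconj : h * g * h⁻¹ ∈ zpowers g := by
    have hhg : h * g = g ^ 2 * h := by
      apply Units.ext
      rw [Units.val_mul, Units.val_mul, Units.val_pow_eq_pow_val, hg, hh]
      exact quat_h_mul_g hsum
    rw [mul_inv_eq_of_eq_mul hhg]
    exact pow_mem (mem_zpowers g) 2
  rw [natCard_closure_pair_of_conj_mem_zpowers (orderOf_pos_iff.mp (by omega))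
    (orderOf_pos_iff.mp (by omega)) hconj (by rw [ord_g, ord_h]; norm_num), ord_g, ord_h]
end

section
/- Let ω and φ be real quaternions satisfying φ² = −1, (ωφ)² = −1, and ω + ω² = −1, and let g = [[ω,0],[0,1]] and h = [[φ,0],[0,φ]] in M₂(ℍ). Then the ℝ-subalgebra of M₂(ℍ) generated by g and h is six-dimensional over ℝ and is isomorphic as an ℝ-algebra to the product ℂ × ℍ. -/
/-!
Both generators lie in the image of the injective algebra map
`Φ : ℂ × ℍ → M₂(ℍ)`, `(z, q) ↦ diag(q, c z)`, where `c : ℂ → ℍ` sends `i` to `φ`: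
`g = Φ (1, ω)` and `h = Φ (i, φ)`. So it suffices that `(1, ω)` and `(i, φ)` generate `ℂ × ℍ`.
As `ω² + ω + 1 = 0`, the element `((1, ω)² + (1, ω) + 1) / 3` is the idempotent `(1, 0)`, which
splits the factors; in `ℍ`, `(1 + 2ω) / √3` and `φ` are anticommuting square roots of `-1`,
hence generate `ℍ`.
-/

open Quaternion

section CubeRootOfUnity

variable {A : Type*} [Ring A] {ω φ : A}

theorem mul_self_eq_neg_one_sub_of_add_sq (hω : ω + ω ^ 2 = -1) : ω * ω = -1 - ω := by
  rw [← sq]; exact eq_sub_of_add_eq' hω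

theorem pow_three_eq_one_of_add_sq (hω : ω + ω ^ 2 = -1) : ω ^ 3 = 1 := by
  have h := mul_self_eq_neg_one_sub_of_add_sq hω
  calc ω ^ 3 = ω * (ω * ω) := by noncomm_ring
    _ = 1 := by rw [h, mul_sub, h]; noncomm_ring

theorem mul_eq_sq_mul_of_add_sq (hφ : φ ^ 2 = -1) (hωφ : (ω * φ) ^ 2 = -1)
    (hω : ω + ω ^ 2 = -1) : φ * ω = ω ^ 2 * φ := by
  have hωφω : ω * φ * ω = φ := by
    have := congrArg (· * φ) hωφ
    simp only [sq, mul_assoc, ← sq φ, hφ] at this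
    simpa [mul_assoc] using congrArg Neg.neg this
  calc φ * ω = ω ^ 3 * (φ * ω) := by rw [pow_three_eq_one_of_add_sq hω, one_mul]
    _ = ω ^ 2 * (ω * φ * ω) := by noncomm_ring
    _ = ω ^ 2 * φ := by rw [hωφω]

theorem one_add_two_mul_mul_self_of_add_sq (hω : ω + ω ^ 2 = -1) :
    (1 + 2 * ω) * (1 + 2 * ω) = -3 := by
  have h := mul_self_eq_neg_one_sub_of_add_sq hω
  calc (1 + 2 * ω) * (1 + 2 * ω) = 1 + 4 * ω + 4 * (ω * ω) := by noncomm_ring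
    _ = -3 := by rw [h]; noncomm_ring; norm_num

theorem mul_one_add_two_mul_eq_neg_mul_of_add_sq (hφ : φ ^ 2 = -1) (hωφ : (ω * φ) ^ 2 = -1)
    (hω : ω + ω ^ 2 = -1) : φ * (1 + 2 * ω) = -((1 + 2 * ω) * φ) := by
  calc φ * (1 + 2 * ω) = φ + 2 * (φ * ω) := by noncomm_ring
    _ = -((1 + 2 * ω) * φ) := by
      rw [mul_eq_sq_mul_of_add_sq hφ hωφ hω, sq, mul_self_eq_neg_one_sub_of_add_sq hω]
      noncomm_ring

end CubeRootOfUnity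

namespace Quaternion

theorem adjoin_eq_top_of_anticomm {i j : ℍ[ℝ]} (hi : i * i = -1) (hj : j * j = -1)
    (hij : j * i = -(i * j)) : Algebra.adjoin ℝ {i, j} = ⊤ := by
  let b : QuaternionAlgebra.Basis ℍ[ℝ] (-1 : ℝ) 0 (-1) :=
    { i := i, j := j, k := i * j
      i_mul_i := by simp [hi]
      j_mul_j := by simp [hj]
      i_mul_j := rfl
      j_mul_i := by simp [hij] }
  let ψ : ℍ[ℝ] →ₐ[ℝ] ℍ[ℝ] := b.liftHom
  have hsurj : Function.Surjective ψ :=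
    LinearMap.injective_iff_surjective (f := ψ.toLinearMap).mp ψ.toRingHom.injective
  have hi_mem : i ∈ Algebra.adjoin ℝ {i, j} := Algebra.subset_adjoin (by simp)
  have hj_mem : j ∈ Algebra.adjoin ℝ {i, j} := Algebra.subset_adjoin (by simp)
  have hrange : ψ.range = Algebra.adjoin ℝ {i, j, i * j} := b.range_liftHom
  rw [eq_top_iff]
  rintro x -
  obtain ⟨y, rfl⟩ := hsurj x
  have hy : ψ y ∈ Algebra.adjoin ℝ {i, j, i * j} := hrange ▸ ⟨y, rfl⟩
  refine Algebra.adjoin_le ?_ hy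
  rintro _ (rfl | rfl | rfl)
  exacts [hi_mem, hj_mem, mul_mem hi_mem hj_mem]

theorem adjoin_eq_top_of_add_sq {ω φ : ℍ[ℝ]} (hφ : φ ^ 2 = -1) (hωφ : (ω * φ) ^ 2 = -1)
    (hω : ω + ω ^ 2 = -1) : Algebra.adjoin ℝ {ω, φ} = ⊤ := by
  set i : ℍ[ℝ] := (√3)⁻¹ • (1 + 2 * ω)
  have hi : i * i = -1 := by
    have h3 : ((√3)⁻¹ * (√3)⁻¹) * 3 = 1 := by
      rw [← mul_inv, Real.mul_self_sqrt (by norm_num : (0:ℝ) ≤ 3)]; norm_num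
    rw [smul_mul_smul_comm, one_add_two_mul_mul_self_of_add_sq hω, smul_neg,
      ← map_ofNat (algebraMap ℝ ℍ[ℝ]) 3, Algebra.smul_def, ← map_mul, h3, map_one]
  have hij : φ * i = -(i * φ) := by
    rw [mul_smul_comm, smul_mul_assoc, mul_one_add_two_mul_eq_neg_mul_of_add_sq hφ hωφ hω, smul_neg]
  rw [eq_top_iff, ← adjoin_eq_top_of_anticomm hi (by rw [← sq, hφ]) hij]
  refine Algebra.adjoin_le ?_
  have hω_mem : ω ∈ Algebra.adjoin ℝ {ω, φ} := Algebra.subset_adjoin (by simp)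
  rintro _ (rfl | rfl)
  · exact Subalgebra.smul_mem _ (add_mem (one_mem _) (mul_mem (ofNat_mem _ 2) hω_mem)) _
  · exact Algebra.subset_adjoin (by simp)

end Quaternion

theorem Subalgebra.prod_eq_top_of_map_fst_of_map_snd {R A B : Type*} [CommRing R] [Ring A]
    [Ring B] [Algebra R A] [Algebra R B] {S : Subalgebra R (A × B)} (he : ((1 : A), (0 : B)) ∈ S)
    (hA : S.map (AlgHom.fst R A B) = ⊤) (hB : S.map (AlgHom.snd R A B) = ⊤) : S = ⊤ := by
  rw [eq_top_iff]
  rintro ⟨a, b⟩ -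
  obtain ⟨x, hx, rfl⟩ := Subalgebra.mem_map.mp (hA ▸ Algebra.mem_top : a ∈ S.map _)
  obtain ⟨y, hy, rfl⟩ := Subalgebra.mem_map.mp (hB ▸ Algebra.mem_top : b ∈ S.map _)
  have hdecomp : ((x.1, y.2) : A × B) = (1, 0) * x + (1 - (1, 0)) * y := by ext <;> simp
  rw [AlgHom.fst_apply, AlgHom.snd_apply, hdecomp]
  exact add_mem (mul_mem he hx) (mul_mem (sub_mem (one_mem S) he) hy)

namespace Matrix

variable {R A C : Type*} [CommSemiring R] [Semiring A] [Semiring C] [Algebra R A] [Algebra R C]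

def diagonalFinTwoAlgHom (f g : A →ₐ[R] C) : A →ₐ[R] Matrix (Fin 2) (Fin 2) C :=
  (diagonalAlgHom R).comp (AlgHom.pi ![f, g])

theorem diagonalFinTwoAlgHom_apply (f g : A →ₐ[R] C) (x : A) :
    diagonalFinTwoAlgHom f g x = !![f x, 0; 0, g x] := by
  rw [← diagonal_vec2]
  ext i
  fin_cases i <;> rfl

theorem diagonalFinTwoAlgHom_injective {f g : A →ₐ[R] C}
    (hfg : ∀ x y, f x = f y → g x = g y → x = y) :
    Function.Injective (diagonalFinTwoAlgHom f g) := by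
  intro x y hxy
  simp only [diagonalFinTwoAlgHom_apply] at hxy
  exact hfg x y (congrFun (congrFun hxy 0) 0) (congrFun (congrFun hxy 1) 1)

end Matrix

theorem adjoin_complex_prod_quaternion_eq_top {ω φ : ℍ[ℝ]} (hφ : φ ^ 2 = -1)
    (hωφ : (ω * φ) ^ 2 = -1) (hω : ω + ω ^ 2 = -1) :
    Algebra.adjoin ℝ {((1 : ℂ), ω), (Complex.I, φ)} = ⊤ := by
  set S := Algebra.adjoin ℝ {((1 : ℂ), ω), (Complex.I, φ)}
  have hx : ((1 : ℂ), ω) ∈ S := Algebra.subset_adjoin (by simp)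
  apply Subalgebra.prod_eq_top_of_map_fst_of_map_snd
  · have hω' : ω * ω + ω + 1 = 0 := by rw [mul_self_eq_neg_one_sub_of_add_sq hω]; abel
    have he : (3 : ℝ)⁻¹ • ((1, ω) * (1, ω) + (1, ω) + 1) = ((1 : ℂ), (0 : ℍ[ℝ])) := by
      refine Prod.ext ?_ ?_
      · simp only [Prod.smul_fst, Prod.fst_add, Prod.fst_mul, Prod.fst_one]
        norm_num
      · simp only [Prod.smul_snd, Prod.snd_add, Prod.snd_mul, Prod.snd_one, hω', smul_zero]
    rw [← he]
    exact Subalgebra.smul_mem _ (add_mem (add_mem (mul_mem hx hx) hx) (one_mem _)) _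
  · rw [AlgHom.map_adjoin, Set.image_pair, eq_top_iff, ← Complex.adjoin_I]
    exact Algebra.adjoin_mono (by simp)
  · rw [AlgHom.map_adjoin, Set.image_pair]
    exact Quaternion.adjoin_eq_top_of_add_sq hφ hωφ hω

/-- Let `ω, φ` be quaternions with `φ² = −1`, `(ωφ)² = −1`, `ω + ω² = −1`, and let
`g = [[ω,0],[0,1]]` and `h = [[φ,0],[0,φ]]` in `M₂(ℍ)`.  Then the `ℝ`-subalgebra of
`M₂(ℍ)` generated by `g` and `h` is 6-dimensional over `ℝ` and is isomorphic as an
`ℝ`-algebra to `ℂ × ℍ`. -/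
theorem neutrino_spin_algebra_iso_C_prod_H (ω φ : ℍ[ℝ])
    (hφ : φ ^ 2 = -1) (hωφ : (ω * φ) ^ 2 = -1) (hω : ω + ω ^ 2 = -1)
    (g h : Matrix (Fin 2) (Fin 2) ℍ[ℝ])
    (hg : g = !![ω, 0; 0, 1]) (hh : h = !![φ, 0; 0, φ]) :
    Module.finrank ℝ
        ↥(Algebra.adjoin ℝ ({g, h} : Set (Matrix (Fin 2) (Fin 2) ℍ[ℝ]))) = 6 ∧
    Nonempty ((Algebra.adjoin ℝ ({g, h} : Set (Matrix (Fin 2) (Fin 2) ℍ[ℝ]))) ≃ₐ[ℝ]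
      (ℂ × ℍ[ℝ])) := by
  let c : ℂ →ₐ[ℝ] ℍ[ℝ] := Complex.liftAux φ (by rw [← sq, hφ])
  let Φ := Matrix.diagonalFinTwoAlgHom (AlgHom.snd ℝ ℂ ℍ[ℝ]) (c.comp (AlgHom.fst ℝ ℂ ℍ[ℝ]))
  have hΦinj : Function.Injective Φ := Matrix.diagonalFinTwoAlgHom_injective
    fun x y h₂ h₁ => Prod.ext (c.toRingHom.injective h₁) h₂
  have hrange : Algebra.adjoin ℝ {g, h} = Φ.range := by
    rw [← Algebra.map_top, ← adjoin_complex_prod_quaternion_eq_top hφ hωφ hω, AlgHom.map_adjoin,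
      Set.image_pair, hg, hh]
    simp [Φ, c, Matrix.diagonalFinTwoAlgHom_apply]
  let e : (ℂ × ℍ[ℝ]) ≃ₐ[ℝ] Φ.range := AlgEquiv.ofInjective Φ hΦinj
  rw [hrange]
  refine ⟨?_, ⟨e.symm⟩⟩
  rw [← e.toLinearEquiv.finrank_eq, Module.finrank_prod, Complex.finrank_real_complex,
    Quaternion.finrank_eq_four]
end
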